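/- arXiv:math/0702206 — 3 statements merged into one kernel-verified Lean document; each statement's English description precedes it below -/
import Mathlib

section
/- For all n, m ≥ 1 one has Trace( (T_{(2),n})^m ) = Trace( (T_{(1),m})^n ): the trace of the m-th power of the row transfer matrix equals the trace of the n-th power of the column transfer matrix, both computing the torus partition function Z(n,m). -/
open BigOperators

/-- The partition function of the translation-invariant lattice model with Boltzmann
weights `R` on the `n × m` torus. -/
noncomputable def Zfun (a b : ℕ) (R : (Fin a × Fin b) × (Fin a × Fin b) → ℂ)
    (n m : ℕ) [NeZero n] [NeZero m] : ℂ :=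
  ∑ h : ZMod n × ZMod m → Fin a, ∑ v : ZMod n × ZMod m → Fin b,
    ∏ p : ZMod n × ZMod m,
      R ((h p, v p), (h (p.1 - 1, p.2), v (p.1, p.2 - 1)))

/-- The row transfer matrix `T_{(2),n}`, indexed by functions `ZMod n → Fin b`. -/
noncomputable def rowTransfer (a b : ℕ) (R : (Fin a × Fin b) × (Fin a × Fin b) → ℂ)
    (n : ℕ) [NeZero n] :
    Matrix (ZMod n → Fin b) (ZMod n → Fin b) ℂ :=
  Matrix.of fun v' v =>
    ∑ h : ZMod n → Fin a, ∏ i : ZMod n, R ((h i, v' i), (h (i - 1), v i))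

/-- The column transfer matrix `T_{(1),m}`, indexed by functions `ZMod m → Fin a`. -/
noncomputable def colTransfer (a b : ℕ) (R : (Fin a × Fin b) × (Fin a × Fin b) → ℂ)
    (m : ℕ) [NeZero m] :
    Matrix (ZMod m → Fin a) (ZMod m → Fin a) ℂ :=
  Matrix.of fun h' h =>
    ∑ v : ZMod m → Fin b, ∏ j : ZMod m, R ((h' j, v j), (h j, v (j - 1)))

/-- Trace of `B * A ^ k` as a sum over paths of length `k`. -/
lemma trace_mul_pow_aux {ι : Type*} [Fintype ι] [DecidableEq ι] (A : Matrix ι ι ℂ) :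
    ∀ (k : ℕ) (B : Matrix ι ι ℂ), Matrix.trace (B * A ^ k) =
      ∑ f : Fin (k + 1) → ι,
        B (f (Fin.last k)) (f 0) * ∏ i : Fin k, A (f i.castSucc) (f i.succ) := by
  intro k
  induction k with
  | zero =>
    intro B
    simp [Matrix.trace]
    rw [← (Equiv.funUnique (Fin 1) ι).symm.sum_comp]
    simp
  | succ k ih =>
    intro B
    have h1 : Matrix.trace (B * A ^ (k + 1)) = Matrix.trace ((A * B) * A ^ k) := by
      rw [pow_succ, ← Matrix.mul_assoc, Matrix.trace_mul_comm, ← Matrix.mul_assoc]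
    rw [h1, ih]
    rw [← (Fin.snocEquiv (fun _ : Fin (k+2) => ι)).sum_comp]
    rw [Fintype.sum_prod_type, Finset.sum_comm]
    apply Finset.sum_congr rfl
    intro f _
    simp only [Matrix.mul_apply, Finset.sum_mul]
    apply Finset.sum_congr rfl
    intro x _
    simp only [Fin.snocEquiv_apply, Fin.snoc_last]
    have h0 : (Fin.snoc f x : Fin (k+2) → ι) 0 = f 0 := by
      have : (0 : Fin (k+2)) = Fin.castSucc 0 := rfl
      rw [this, Fin.snoc_castSucc]
    rw [h0, Fin.prod_univ_castSucc (n := k)]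
    simp only [Fin.succ_castSucc, Fin.snoc_castSucc,
      Fin.succ_last, Fin.snoc_last]
    ring

/-- Closing up a `Fin (k+1)`-indexed cyclic product. -/
lemma fin_cyclic_aux {ι : Type*} (A : Matrix ι ι ℂ) (k : ℕ) (f : Fin (k+1) → ι) :
    ∏ j : Fin (k+1), A (f j) (f (j+1)) =
      A (f (Fin.last k)) (f 0) * ∏ i : Fin k, A (f i.castSucc) (f i.succ) := by
  rw [Fin.prod_univ_castSucc]
  have h1 : ∀ i : Fin k, (i.castSucc : Fin (k+1)) + 1 = i.succ := by
    intro i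
    ext
    simp [Fin.add_def, Nat.mod_eq_of_lt, Nat.succ_lt_succ i.isLt]
  have h2 : (Fin.last k : Fin (k+1)) + 1 = 0 := by
    ext
    simp [Fin.add_def]
  rw [h2]
  rw [mul_comm]
  congr 1
  exact Finset.prod_congr rfl fun i _ => by rw [h1]

/-- The trace of a matrix power as a cyclic sum over `ZMod m`-indexed configurations. -/
lemma trace_pow_cyclic {ι : Type*} [Fintype ι] [DecidableEq ι]
    (A : Matrix ι ι ℂ) (m : ℕ) [NeZero m] :
    Matrix.trace (A ^ m) = ∑ f : ZMod m → ι, ∏ j : ZMod m, A (f j) (f (j + 1)) := by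
  obtain ⟨k, rfl⟩ : ∃ k, m = k + 1 := ⟨m - 1, (Nat.succ_pred_eq_of_pos (NeZero.pos m)).symm⟩
  have h : Matrix.trace (A ^ (k+1)) = Matrix.trace (A * A ^ k) := by
    rw [pow_succ, Matrix.trace_mul_comm]
  rw [h, trace_mul_pow_aux A k A]
  exact Finset.sum_congr rfl fun f _ => (fin_cyclic_aux A k f).symm

/-- The trace of a matrix power as a cyclic sum, with the `j - 1` orientation. -/
lemma trace_pow_cyclic' {ι : Type*} [Fintype ι] [DecidableEq ι]
    (A : Matrix ι ι ℂ) (m : ℕ) [NeZero m] :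
    Matrix.trace (A ^ m) = ∑ f : ZMod m → ι, ∏ j : ZMod m, A (f j) (f (j - 1)) := by
  rw [trace_pow_cyclic]
  apply Fintype.sum_equiv ((Equiv.neg (ZMod m)).arrowCongr (Equiv.refl ι))
  intro f
  simp only [Equiv.arrowCongr_apply, Equiv.coe_refl, Equiv.neg_symm, Equiv.neg_apply,
    Function.comp_apply, id_eq]
  apply Fintype.prod_equiv (Equiv.neg (ZMod m))
  intro j
  simp only [Equiv.neg_apply]
  have h : -(-j - 1) = j + 1 := by ring
  rw [h, neg_neg]

/-- The trace of the `m`-th power of the row transfer matrix equals the trace of the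
`n`-th power of the column transfer matrix; both compute the torus partition function
`Z(n,m)`. -/
theorem trace_rowTransfer_pow_eq_trace_colTransfer_pow (a b : ℕ) (ha : 0 < a)
    (hb : 0 < b) (R : (Fin a × Fin b) × (Fin a × Fin b) → ℂ)
    (n m : ℕ) [NeZero n] [NeZero m] :
    Matrix.trace (rowTransfer a b R n ^ m) = Matrix.trace (colTransfer a b R m ^ n) := by
  rw [trace_pow_cyclic', trace_pow_cyclic']
  simp only [rowTransfer, colTransfer, Matrix.of_apply]
  have L : ∀ F : ZMod m → ZMod n → Fin b,
      (∏ j : ZMod m, ∑ h : ZMod n → Fin a,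
        ∏ i : ZMod n, R ((h i, F j i), (h (i - 1), F (j - 1) i))) =
      ∑ H : ZMod m → ZMod n → Fin a, ∏ j : ZMod m,
        ∏ i : ZMod n, R ((H j i, F j i), (H j (i - 1), F (j - 1) i)) :=
    fun F => Fintype.prod_sum _
  have Rr : ∀ G : ZMod n → ZMod m → Fin a,
      (∏ i : ZMod n, ∑ v : ZMod m → Fin b,
        ∏ j : ZMod m, R ((G i j, v j), (G (i - 1) j, v (j - 1)))) =
      ∑ V : ZMod n → ZMod m → Fin b, ∏ i : ZMod n,
        ∏ j : ZMod m, R ((G i j, V i j), (G (i - 1) j, V i (j - 1))) :=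
    fun G => Fintype.prod_sum _
  rw [Finset.sum_congr rfl fun F _ => L F, Finset.sum_congr rfl fun G _ => Rr G]
  rw [Finset.sum_comm]
  apply Fintype.sum_equiv
    (⟨Function.swap, Function.swap, fun _ => rfl, fun _ => rfl⟩ :
      (ZMod m → ZMod n → Fin a) ≃ (ZMod n → ZMod m → Fin a))
  intro H
  apply Fintype.sum_equiv
    (⟨Function.swap, Function.swap, fun _ => rfl, fun _ => rfl⟩ :
      (ZMod m → ZMod n → Fin b) ≃ (ZMod n → ZMod m → Fin b))
  intro F
  rw [Finset.prod_comm]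
  rfl
end

section
/- Let A be an N×N integer matrix and let F : (ℂ^×)^N → (ℂ^×)^N be the endomorphism of the torus given by F(z_1,…,z_N) = (Π_i z_i^{A_{i,1}}, …, Π_i z_i^{A_{i,N}}). For every n ≥ 1 such that det(A^n − Id) ≠ 0, the set of fixed points of the n-fold iterate F^n is finite and has exactly |det(A^n − Id)| elements. -/
/-!
The fixed points of `F^[n]` form the kernel of the monomial map of `D = Aⁿ - 1`. A point `z` of
that kernel is the same as the character `v ↦ ∏ i, z i ^ v i` of `ℤᴺ` that vanishes on `D ℤᴺ`,
i.e. a character `ℤᴺ ⧸ D ℤᴺ → ℂˣ`. When `det D ≠ 0` this quotient is a finite abelian group of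
order `|det D|` (Smith normal form), and a finite abelian group has exactly as many `ℂˣ`-valued
characters as elements.
-/

theorem Finset.prod_zpow_eq_zpow_sum {G ι : Type*} [CommGroup G] (s : Finset ι) (a : G)
    (f : ι → ℤ) : ∏ i ∈ s, a ^ f i = a ^ ∑ i ∈ s, f i := by
  induction s using Finset.cons_induction <;> simp [zpow_add, *]

namespace Matrix

variable {ι : Type*} [Fintype ι]

section monomialHom

variable {G : Type*} [CommGroup G]

variable (G) in
def monomialHom (D : Matrix ι ι ℤ) : (ι → G) →* (ι → G) where
  toFun z j := ∏ i, z i ^ D i j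
  map_one' := by ext; simp
  map_mul' z w := by ext j; simp [mul_zpow, Finset.prod_mul_distrib]

@[simp]
theorem monomialHom_apply (D : Matrix ι ι ℤ) (z : ι → G) (j : ι) :
    monomialHom G D z j = ∏ i, z i ^ D i j := rfl

theorem monomialHom_mul (B C : Matrix ι ι ℤ) :
    monomialHom G (B * C) = (monomialHom G C).comp (monomialHom G B) := by
  ext z j
  simp only [monomialHom_apply, MonoidHom.coe_comp, Function.comp_apply, mul_apply,
    ← Finset.prod_zpow_eq_zpow_sum, _root_.zpow_mul, ← Finset.prod_zpow]
  exact Finset.prod_comm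

theorem monomialHom_sub (B C : Matrix ι ι ℤ) (z : ι → G) :
    monomialHom G (B - C) z = monomialHom G B z / monomialHom G C z := by
  ext j
  simp only [monomialHom_apply, Pi.div_apply, sub_apply, _root_.zpow_sub,
    Finset.prod_mul_distrib, Finset.prod_inv_distrib, div_eq_mul_inv]

variable [DecidableEq ι]

theorem monomialHom_one : monomialHom G (1 : Matrix ι ι ℤ) = MonoidHom.id _ := by
  ext z j
  simp [one_apply]

theorem coe_monomialHom_pow (A : Matrix ι ι ℤ) (n : ℕ) :
    ⇑(monomialHom G (A ^ n)) = (monomialHom G A)^[n] := by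
  induction n with
  | zero => simp [monomialHom_one]
  | succ n ih => rw [pow_succ, monomialHom_mul, MonoidHom.coe_comp, ih, Function.iterate_succ']

theorem mem_ker_monomialHom_pow_sub_one {A : Matrix ι ι ℤ} {n : ℕ} {z : ι → G} :
    z ∈ (monomialHom G (A ^ n - 1)).ker ↔ (monomialHom G A)^[n] z = z := by
  rw [MonoidHom.mem_ker, monomialHom_sub, monomialHom_one, div_eq_one, coe_monomialHom_pow]
  rfl

end monomialHom

variable [DecidableEq ι]

section quotient

variable {R M : Type*} [CommRing R] [AddCommGroup M] [Module R M]

theorem piRing_symm_comp_toLin' (D : Matrix ι ι R) (m : ι → M) :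
    (LinearEquiv.piRing R M ι R).symm m ∘ₗ D.toLin' =
      (LinearEquiv.piRing R M ι R).symm fun j => ∑ i, D i j • m i := by
  ext j
  simp [Pi.single_apply]

theorem range_toLin'_le_ker_piRing_symm_iff {D : Matrix ι ι R} {m : ι → M} :
    LinearMap.range D.toLin' ≤ LinearMap.ker ((LinearEquiv.piRing R M ι R).symm m) ↔
      ∀ j, ∑ i, D i j • m i = 0 := by
  rw [LinearMap.range_le_ker_iff, piRing_symm_comp_toLin', LinearEquiv.map_eq_zero_iff,
    funext_iff]
  rfl

def linearMapQuotRangeToLin'Equiv (D : Matrix ι ι R) :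
    ((ι → R) ⧸ LinearMap.range D.toLin' →ₗ[R] M) ≃ {m : ι → M // ∀ j, ∑ i, D i j • m i = 0} where
  toFun f := ⟨LinearEquiv.piRing R M ι R (f ∘ₗ Submodule.mkQ _),
    range_toLin'_le_ker_piRing_symm_iff.1 <| by
      rw [LinearEquiv.symm_apply_apply]
      intro x hx
      simp [(Submodule.Quotient.mk_eq_zero _).2 hx]⟩
  invFun m := Submodule.liftQ _ _ (range_toLin'_le_ker_piRing_symm_iff.2 m.2)
  left_inv f := Submodule.linearMap_qext _ (by simp)
  right_inv m := Subtype.ext (by simp)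

end quotient

theorem card_quotient_range_toLin' {D : Matrix ι ι ℤ} (hD : D.det ≠ 0) :
    Nat.card ((ι → ℤ) ⧸ LinearMap.range D.toLin') = D.det.natAbs := by
  rw [← (LinearMap.range D.toLin').natAbs_det_equiv
    (LinearEquiv.ofInjective _ (mulVec_injective_of_det_ne_zero hD)), ← LinearMap.det_toLin' D]
  rfl

def kerMonomialHomEquiv {G : Type*} [CommGroup G] (D : Matrix ι ι ℤ) :
    (monomialHom G D).ker ≃ {m : ι → Additive G // ∀ j, ∑ i, D i j • m i = 0} :=
  Equiv.subtypeEquiv (Equiv.piCongrRight fun _ => Additive.ofMul) fun z => by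
    simp [funext_iff, ← ofMul_zpow, ← ofMul_prod]

theorem card_ker_monomialHom {K : Type*} [Field K] [IsSepClosed K] [CharZero K]
    {D : Matrix ι ι ℤ} (hD : D.det ≠ 0) :
    Nat.card (monomialHom Kˣ D).ker = D.det.natAbs := by
  set Q := (ι → ℤ) ⧸ LinearMap.range D.toLin'
  have hQ : Nat.card Q = D.det.natAbs := card_quotient_range_toLin' hD
  have : Finite Q := Nat.finite_of_card_ne_zero (by simpa [hQ])
  -- gives `HasEnoughRootsOfUnity K (Monoid.exponent Q)`, since `K` is separably closed of char 0
  have : NeZero (Monoid.exponent (Multiplicative Q)) := ⟨Monoid.exponent_ne_zero_of_finite⟩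
  calc Nat.card (monomialHom Kˣ D).ker
      = Nat.card {m : ι → Additive Kˣ // ∀ j, ∑ i, D i j • m i = 0} :=
        Nat.card_congr (kerMonomialHomEquiv D)
    _ = Nat.card (Q →ₗ[ℤ] Additive Kˣ) :=
        (Nat.card_congr (linearMapQuotRangeToLin'Equiv D)).symm
    _ = Nat.card (Q →+ Additive Kˣ) := Nat.card_congr (addMonoidHomLequivInt ℤ).toEquiv.symm
    _ = Nat.card (Multiplicative Q →* Kˣ) := Nat.card_congr AddMonoidHom.toMultiplicativeLeft
    _ = Nat.card Q := CommGroup.card_monoidHom_of_hasEnoughRootsOfUnity _ _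
    _ = D.det.natAbs := hQ

theorem finite_ker_monomialHom {K : Type*} [Field K] [IsSepClosed K] [CharZero K]
    {D : Matrix ι ι ℤ} (hD : D.det ≠ 0) : Finite (monomialHom Kˣ D).ker :=
  Nat.finite_of_card_ne_zero <| by rw [card_ker_monomialHom hD]; exact Int.natAbs_ne_zero.2 hD

end Matrix

theorem torus_endomorphism_card_fixedPoints_general (N : ℕ) (A : Matrix (Fin N) (Fin N) ℤ)
    (F : (Fin N → ℂˣ) → (Fin N → ℂˣ))
    (hF : ∀ (z : Fin N → ℂˣ) (j : Fin N), F z j = ∏ i : Fin N, z i ^ A i j)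
    (n : ℕ) (hdet : (A ^ n - 1).det ≠ 0) :
    {z : Fin N → ℂˣ | F^[n] z = z}.Finite ∧
    Nat.card {z : Fin N → ℂˣ | F^[n] z = z} = (A ^ n - 1).det.natAbs := by
  have hFA : F = A.monomialHom ℂˣ := funext fun z => funext (hF z)
  have hfix : {z | F^[n] z = z} = ((A ^ n - 1).monomialHom ℂˣ).ker := by
    ext z
    rw [hFA]
    exact Matrix.mem_ker_monomialHom_pow_sub_one.symm
  rw [hfix]
  exact ⟨Set.finite_coe_iff.1 (Matrix.finite_ker_monomialHom hdet),
    Matrix.card_ker_monomialHom hdet⟩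

/-- The number of fixed points of the `n`-th iterate of the torus endomorphism attached
to an integer matrix `A` equals `|det(Aⁿ - Id)|`, whenever this determinant is
nonzero. -/
theorem torus_endomorphism_card_fixedPoints (N : ℕ) (A : Matrix (Fin N) (Fin N) ℤ)
    (F : (Fin N → ℂˣ) → (Fin N → ℂˣ))
    (hF : ∀ (z : Fin N → ℂˣ) (j : Fin N), F z j = ∏ i : Fin N, z i ^ A i j)
    (n : ℕ) (hn : 1 ≤ n) (hdet : (A ^ n - 1).det ≠ 0) :
    {z : Fin N → ℂˣ | F^[n] z = z}.Finite ∧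
    Nat.card {z : Fin N → ℂˣ | F^[n] z = z} = (A ^ n - 1).det.natAbs :=
  torus_endomorphism_card_fixedPoints_general N A F hF n hdet
end

section
/- For every real q > 1 and every real t with |t| < q, the series Σ_{n≥1} (t^n/n)·q^n/(q^n−1)^2 converges absolutely, the infinite product Π_{m≥1} (1 − q^{−m} t)^m converges, and exp( − Σ_{n≥1} (t^n/n)·q^n/(q^n−1)^2 ) = Π_{m≥1} (1 − q^{−m} t)^m. -/
/-!
Put `x_m = t / q^(m+1)`, so `|x_m| < 1`. Taking logarithms, the product is `exp` of
`∑_m (m+1) log(1 - x_m) = -∑_m ∑_n (m+1) x_m^(n+1)/(n+1)`. The double series converges absolutely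
(it is dominated by `(m+1) q^(-m) (|t|/q)^(n+1)`), so it may be summed in the other order, and for
fixed `n` the sum over `m` is `t^(n+1)/(n+1) · ∑_m (m+1) Q^(-(m+1)) = t^(n+1)/(n+1) · Q/(Q-1)²`
with `Q = q^(n+1)`.
-/

open Real

lemma hasSum_succ_mul_inv_pow_succ {Q : ℝ} (hQ : 1 < Q) :
    HasSum (fun m : ℕ => ((m : ℝ) + 1) * Q⁻¹ ^ (m + 1)) (Q / (Q - 1) ^ 2) := by
  have hQ0 : 0 < Q := zero_lt_one.trans hQ
  have hc : ‖Q⁻¹‖ < 1 := by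
    rw [norm_inv, Real.norm_of_nonneg hQ0.le]
    exact inv_lt_one_of_one_lt₀ hQ
  have hsum : Q⁻¹ * (1 / (1 - Q⁻¹) ^ (1 + 1)) = Q / (Q - 1) ^ 2 := by
    have : Q - 1 ≠ 0 := sub_ne_zero.mpr hQ.ne'
    rw [one_add_one_eq_two]
    field_simp
  refine hsum ▸ ((hasSum_choose_mul_geometric_of_norm_lt_one 1 hc).mul_left Q⁻¹).congr_fun
    fun m => ?_
  rw [Nat.choose_one_right, Nat.cast_add, Nat.cast_one, pow_succ]
  ring

section

variable {q t : ℝ}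

lemma abs_div_pow_succ_lt_one (hq : 1 < q) (ht : |t| < q) (m : ℕ) : |t / q ^ (m + 1)| < 1 := by
  have hq0 : 0 < q := zero_lt_one.trans hq
  rw [abs_div, abs_of_pos (pow_pos hq0 _), div_lt_one (pow_pos hq0 _)]
  exact ht.trans_le (le_self_pow₀ hq.le m.succ_ne_zero)

lemma hasSum_succ_mul_div_pow_succ_pow_succ (hq : 1 < q) (t : ℝ) (n : ℕ) :
    HasSum (fun m : ℕ => ((m : ℝ) + 1) * ((t / q ^ (m + 1)) ^ (n + 1) / (n + 1)))
      (t ^ (n + 1) / (n + 1) * (q ^ (n + 1) / (q ^ (n + 1) - 1) ^ 2)) := by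
  refine ((hasSum_succ_mul_inv_pow_succ (one_lt_pow₀ hq n.succ_ne_zero)).mul_left
    (t ^ (n + 1) / (n + 1))).congr_fun fun m => ?_
  rw [div_pow, ← pow_mul, ← inv_pow, ← pow_mul, mul_comm (n + 1)]
  ring

lemma summable_abs_succ_mul_div_pow_succ_pow_succ (hq : 1 < q) (ht : |t| < q) :
    Summable fun p : ℕ × ℕ =>
      |((p.1 : ℝ) + 1) * ((t / q ^ (p.1 + 1)) ^ (p.2 + 1) / (p.2 + 1))| := by
  have hq0 : 0 < q := zero_lt_one.trans hq
  have hx m : |t / q ^ (m + 1)| = |t| * q⁻¹ ^ (m + 1) := by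
    rw [abs_div, abs_of_pos (pow_pos hq0 _), inv_pow, div_eq_mul_inv]
  have hxr m : |t / q ^ (m + 1)| ≤ |t| / q := by
    rw [abs_div, abs_of_pos (pow_pos hq0 _)]
    exact div_le_div_of_nonneg_left (abs_nonneg t) hq0 (le_self_pow₀ hq.le m.succ_ne_zero)
  have hdom := ((hasSum_succ_mul_inv_pow_succ hq).summable.mul_of_nonneg
    (summable_geometric_of_lt_one (by positivity) ((div_lt_one hq0).mpr ht))
    (fun m => by positivity) (fun n => by positivity)).mul_left |t|
  refine hdom.of_nonneg_of_le (fun _ => abs_nonneg _) fun ⟨m, n⟩ => ?_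
  calc |((m : ℝ) + 1) * ((t / q ^ (m + 1)) ^ (n + 1) / (n + 1))|
      = ((m : ℝ) + 1) * (|t / q ^ (m + 1)| ^ n * |t / q ^ (m + 1)| / (n + 1)) := by
        rw [abs_mul, abs_div, abs_pow, pow_succ, abs_of_pos (by positivity : (0 : ℝ) < m + 1),
          abs_of_pos (by positivity : (0 : ℝ) < n + 1)]
    _ ≤ ((m : ℝ) + 1) * (|t / q ^ (m + 1)| ^ n * |t / q ^ (m + 1)|) := by
        gcongr
        exact div_le_self (by positivity) (le_add_of_nonneg_left n.cast_nonneg)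
    _ ≤ ((m : ℝ) + 1) * ((|t| / q) ^ n * |t / q ^ (m + 1)|) := by
        gcongr
        exact hxr m
    _ = |t| * (((m : ℝ) + 1) * q⁻¹ ^ (m + 1) * (|t| / q) ^ n) := by
        rw [hx]
        ring

lemma exists_hasSum_and_hasSum_succ_mul_log (hq : 1 < q) (ht : |t| < q) :
    ∃ S : ℝ,
      HasSum (fun n : ℕ => t ^ (n + 1) / (n + 1) * (q ^ (n + 1) / (q ^ (n + 1) - 1) ^ 2)) S ∧
      HasSum (fun m : ℕ => ((m : ℝ) + 1) * log (1 - t / q ^ (m + 1))) (-S) := by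
  have hf := (summable_abs_succ_mul_div_pow_succ_pow_succ hq ht).of_abs
  refine ⟨_, ((Equiv.prodComm ℕ ℕ).hasSum_iff.mpr hf.hasSum).prod_fiberwise
    (hasSum_succ_mul_div_pow_succ_pow_succ hq t), ?_⟩
  have hlog m := (hasSum_pow_div_log_of_abs_lt_one (abs_div_pow_succ_lt_one hq ht m)).mul_left
    ((m : ℝ) + 1)
  simpa using (hf.hasSum.prod_fiberwise hlog).neg

end

/-- For real `q > 1` and `|t| < q`, the series `Σ_{n≥1} (tⁿ/n)·qⁿ/(qⁿ-1)²` converges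
absolutely, the infinite product `Π_{m≥1} (1 - q^{-m} t)^m` converges, and
`exp(-Σ_{n≥1} (tⁿ/n)·qⁿ/(qⁿ-1)²) = Π_{m≥1} (1 - q^{-m} t)^m`. -/
theorem exp_neg_tsum_eq_tprod (q t : ℝ) (hq : 1 < q) (ht : |t| < q) :
    Summable (fun n : ℕ =>
      |t ^ (n + 1) / ((n : ℝ) + 1) * (q ^ (n + 1) / (q ^ (n + 1) - 1) ^ 2)|) ∧
    Multipliable (fun m : ℕ => (1 - t / q ^ (m + 1)) ^ (m + 1)) ∧
    Real.exp (-∑' n : ℕ,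
        t ^ (n + 1) / ((n : ℝ) + 1) * (q ^ (n + 1) / (q ^ (n + 1) - 1) ^ 2)) =
      ∏' m : ℕ, (1 - t / q ^ (m + 1)) ^ (m + 1) := by
  obtain ⟨S, hS, hlog⟩ := exists_hasSum_and_hasSum_succ_mul_log hq ht
  -- The series at `|t|` has as terms the absolute values of the terms at `t`.
  obtain ⟨S', hS', -⟩ := exists_hasSum_and_hasSum_succ_mul_log hq (by rwa [abs_abs])
  have hpos m : 0 < 1 - t / q ^ (m + 1) := by
    linarith [(abs_lt.mp (abs_div_pow_succ_lt_one hq ht m)).2]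
  have hprod : HasProd (fun m : ℕ => (1 - t / q ^ (m + 1)) ^ (m + 1)) (exp (-S)) :=
    hasProd_of_hasSum_log (fun m => pow_pos (hpos m) _) (by simpa [log_pow] using hlog)
  refine ⟨hS'.summable.congr fun n => ?_, hprod.multipliable, ?_⟩
  · have : 0 < q ^ (n + 1) - 1 := sub_pos.mpr (one_lt_pow₀ hq n.succ_ne_zero)
    rw [abs_mul, abs_div, abs_pow, abs_of_pos (by positivity : (0 : ℝ) < n + 1),
      abs_of_pos (by positivity : 0 < q ^ (n + 1) / (q ^ (n + 1) - 1) ^ 2)]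
  · rw [hS.tsum_eq, hprod.tprod_eq]
end
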